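/- Let E = {e_i}_{i=1}^∞ be the canonical unit vector basis of c₀ and let M = M(E) ⊆ c₀ be the integer grid, i.e., the set of finitely supported integer-valued sequences. Then the Lipschitz-free space F(M) has a monotone Schauder basis (a Schauder basis with basis constant 1). -/

import Mathlib

open scoped NNReal ENNReal

/-- `F` together with the Dirac map `δ : M → F` is (a realization of) the Lipschitz-free
space `𝓕(M)` of the pointed metric space `(M, base)`, characterized by its universal
property. -/
structure IsLipFreeSpace (M : Type*) [MetricSpace M] (base : M)
    (F : Type*) [NormedAddCommGroup F] [NormedSpace ℝ F] [CompleteSpace F]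
    (δ : M → F) : Prop where
  isometry : Isometry δ
  map_base : δ base = 0
  dense_span : (Submodule.span ℝ (Set.range δ)).topologicalClosure = ⊤
  extend : ∀ (Z : Type) [NormedAddCommGroup Z] [NormedSpace ℝ Z] [CompleteSpace Z]
    (L : ℝ≥0) (f : M → Z), LipschitzWith L f → f base = 0 →
    ∃ T : F →L[ℝ] Z, ‖T‖ ≤ (L : ℝ) ∧ ∀ x : M, T (δ x) = f x

/-- `F` together with `δ : M → F` is (a realization of) the relative Lipschitz-free space
`𝓕_N(M) ≅ 𝓕(M)/𝓕(N)`, again characterized by the universal property (with respect to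
Lipschitz functions vanishing on `N`). -/
structure IsRelLipFreeSpace (M : Type*) [MetricSpace M] (N : Set M)
    (F : Type*) [NormedAddCommGroup F] [NormedSpace ℝ F] [CompleteSpace F]
    (δ : M → F) : Prop where
  lipschitz : LipschitzWith 1 δ
  vanish : ∀ x ∈ N, δ x = 0
  dense_span : (Submodule.span ℝ (Set.range δ)).topologicalClosure = ⊤
  extend : ∀ (Z : Type) [NormedAddCommGroup Z] [NormedSpace ℝ Z] [CompleteSpace Z]
    (L : ℝ≥0) (f : M → Z), LipschitzWith L f → (∀ x ∈ N, f x = 0) →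
    ∃ T : F →L[ℝ] Z, ‖T‖ ≤ (L : ℝ) ∧ ∀ x : M, T (δ x) = f x

/-- `N` is an `(a,b)`-net for some `a, b > 0`. -/
def IsNet {X : Type*} [MetricSpace X] (N : Set X) : Prop :=
  ∃ a b : ℝ, 0 < a ∧ 0 < b ∧
    (∀ x ∈ N, ∀ y ∈ N, x ≠ y → a ≤ dist x y) ∧
    (∀ x : X, EMetric.infEdist x N < ENNReal.ofReal b)

/-- A sequence `e` is a Schauder basis of `Y`: every vector has a unique expansion. -/
def IsSchauderBasis {Y : Type*} [NormedAddCommGroup Y] [NormedSpace ℝ Y] (e : ℕ → Y) : Prop :=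
  ∀ y : Y, ∃! a : ℕ → ℝ,
    Filter.Tendsto (fun n => ∑ i ∈ Finset.range n, a i • e i) Filter.atTop (nhds y)

/-- Density character of a topological space. -/
noncomputable def densityCharacter (M : Type u) [TopologicalSpace M] : Cardinal.{u} :=
  ⨅ s : {s : Set M // Dense s}, Cardinal.mk s

/-- The Banach space `c₀` of real sequences vanishing at infinity. -/
abbrev CZero : Type := ZeroAtInftyContinuousMap ℕ ℝ

/-!
Enumerate the grid as `x₀ = b, x₁, x₂, …` and let `rₙ` retract it onto `{x₀, …, xₙ}`. If every
`rₙ` is `1`-Lipschitz and `rₘ ∘ rₙ = rₘ` for `m ≤ n`, the linearisations `Sₙ` of the `rₙ` are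
commuting norm-one projections on `𝓕(M)` converging strongly to the identity, and `Sₙ₊₁ - Sₙ` has
rank one, with range spanned by `δ xₙ₊₁ - δ (rₙ xₙ₊₁)`; these vectors form a monotone Schauder
basis.

The retractions come from a predecessor map `p`: `rₙ x` follows `x, p x, p (p x), …` until it
reaches `{x₀, …, xₙ}`, and is `1`-Lipschitz as soon as `p` never moves a point away from an
earlier one. On the grid, `p` moves one coordinate a unit step towards `0`: the first largest one
while the sup-norm exceeds the length of the support by at least two, and the last nonzero one
otherwise. Listing the grid by the blocks `max (lastIndex + 1) supNorm`, and inside a block as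
`rankInBlock` does, makes `p` decreasing and ensures that every earlier point has a coordinate no
larger in absolute value at the moved position. Since distinct grid points are at distance at
least `1`, moving that coordinate of `x` one step cannot increase its distance to such a point.
-/

open Filter Topology

section MonotoneBasis

variable {F : Type*} [NormedAddCommGroup F] [NormedSpace ℝ F]

def IsMonotoneSchauderBasis (z : ℕ → F) : Prop :=
  IsSchauderBasis z ∧ ∀ (y : F) (a : ℕ → ℝ),
    Tendsto (fun n => ∑ i ∈ Finset.range n, a i • z i) atTop (𝓝 y) →
    ∀ n : ℕ, ‖∑ i ∈ Finset.range n, a i • z i‖ ≤ ‖y‖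

variable (S : ℕ → F →L[ℝ] F) {z : ℕ → F}

theorem sum_eq_apply_of_tendsto (hSz : ∀ m n, S m (z n) = if n < m then z n else 0)
    {y : F} {a : ℕ → ℝ} (ha : Tendsto (fun n => ∑ i ∈ Finset.range n, a i • z i) atTop (𝓝 y))
    (n : ℕ) : ∑ i ∈ Finset.range n, a i • z i = S n y := by
  have hconst : ∀ m ≥ n,
      S n (∑ i ∈ Finset.range m, a i • z i) = ∑ i ∈ Finset.range n, a i • z i := fun m hm => by
    simp only [map_sum, map_smul, hSz, smul_ite, smul_zero]
    rw [← Finset.sum_filter]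
    congr 1
    ext i
    simp only [Finset.mem_filter, Finset.mem_range]
    omega
  exact tendsto_nhds_unique (tendsto_atTop_of_eventually_const hconst)
    (((S n).continuous.tendsto y).comp ha)

theorem isMonotoneSchauderBasis_of_projections (hS0 : S 0 = 0) (hS : ∀ n, ‖S n‖ ≤ 1)
    (hSy : ∀ y, Tendsto (fun n => S n y) atTop (𝓝 y)) (hz : ∀ n, z n ≠ 0)
    (hSz : ∀ m n, S m (z n) = if n < m then z n else 0)
    (hspan : ∀ n y, S (n + 1) y - S n y ∈ ℝ ∙ z n) : IsMonotoneSchauderBasis z := by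
  choose c hc using fun y n => Submodule.mem_span_singleton.1 (hspan n y)
  have hsum : ∀ y n, ∑ i ∈ Finset.range n, c y i • z i = S n y := fun y n => by
    simp only [hc, Finset.sum_range_sub (fun i => S i y), hS0,
      zero_apply, sub_zero]
  refine ⟨fun y => ⟨c y, by simpa only [hsum] using hSy y, fun a ha => funext fun n => ?_⟩,
    fun y a ha n => ?_⟩
  · refine smul_left_injective ℝ (hz n) ?_
    have h := sum_eq_apply_of_tendsto S hSz ha
    simp only [hc, ← h, Finset.sum_range_succ, add_sub_cancel_left]
  · rw [sum_eq_apply_of_tendsto S hSz ha]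
    exact (S n).le_of_opNorm_le (hS n) y |>.trans_eq (one_mul _)

end MonotoneBasis

namespace IsLipFreeSpace

variable {M : Type*} [MetricSpace M] {b : M} {F : Type} [NormedAddCommGroup F] [NormedSpace ℝ F]
  [CompleteSpace F] {δ : M → F}

theorem eq_top_of_isClosed (hF : IsLipFreeSpace M b F δ) {V : Submodule ℝ F}
    (hV : IsClosed (V : Set F)) (hδ : ∀ x, δ x ∈ V) : V = ⊤ := by
  rw [eq_top_iff, ← hF.dense_span]
  exact Submodule.topologicalClosure_minimal _ (Submodule.span_le.2 (Set.range_subset_iff.2 hδ)) hV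

theorem exists_lift (hF : IsLipFreeSpace M b F δ) {f : M → M} (hf : LipschitzWith 1 f)
    (hfb : f b = b) : ∃ T : F →L[ℝ] F, ‖T‖ ≤ 1 ∧ ∀ x, T (δ x) = δ (f x) := by
  simpa using hF.extend F 1 (δ ∘ f) (by simpa using hF.isometry.lipschitz.comp hf)
    (by simp [hfb, hF.map_base])

theorem tendsto_of_eventually_fix (hF : IsLipFreeSpace M b F δ) {S : ℕ → F →L[ℝ] F}
    (hS : ∀ n, ‖S n‖ ≤ 1) (hfix : ∀ x, ∀ᶠ n in atTop, S n (δ x) = δ x) (y : F) :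
    Tendsto (fun n => S n y) atTop (𝓝 y) := by
  let V : Submodule ℝ F :=
    { carrier := {y | Tendsto (fun n => S n y) atTop (𝓝 y)}
      add_mem' := fun hy hy' => by simpa using hy.add hy'
      zero_mem' := by simp
      smul_mem' := fun c y hy => by simpa using hy.const_smul c }
  have hV : IsClosed (V : Set F) :=
    (LipschitzWith.uniformEquicontinuous (fun n => ⇑(S n)) 1 fun n =>
      (S n).lipschitz.weaken (hS n)).equicontinuous.isClosed_setOfPred_tendsto continuous_id
  have hVtop := hF.eq_top_of_isClosed hV fun x => tendsto_nhds_of_eventually_eq (hfix x)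
  exact (hVtop ▸ Submodule.mem_top : y ∈ V)

theorem exists_isMonotoneSchauderBasis_of_retractions (hF : IsLipFreeSpace M b F δ) (ι : M ≃ ℕ)
    (hb : ι b = 0) (r : ℕ → M → M) (hr : ∀ n, LipschitzWith 1 (r n))
    (hr_le : ∀ n x, ι (r n x) ≤ n) (hr_fix : ∀ n x, ι x ≤ n → r n x = x)
    (hr_comp : ∀ m n x, m ≤ n → r m (r n x) = r m x) :
    ∃ z : ℕ → F, IsMonotoneSchauderBasis z := by
  choose S hS hSδ using fun n => hF.exists_lift (hr n) (hr_fix n b (by omega))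
  have hιu : ∀ n, ι (ι.symm n) = n := ι.apply_symm_apply
  set z : ℕ → F := fun n => δ (ι.symm (n + 1)) - δ (r n (ι.symm (n + 1))) with hz
  refine ⟨z, isMonotoneSchauderBasis_of_projections S ?_ hS ?_ ?_ ?_ ?_⟩
  · have hr0 : ∀ x, r 0 x = b := fun x => ι.injective (by have := hr_le 0 x; omega)
    have hker : LinearMap.ker (S 0 : F →ₗ[ℝ] F) = ⊤ :=
      hF.eq_top_of_isClosed (S 0).isClosed_ker fun x => by
        rw [LinearMap.mem_ker, ContinuousLinearMap.coe_coe, hSδ, hr0, hF.map_base]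
    ext y
    simpa using (hker ▸ Submodule.mem_top : y ∈ LinearMap.ker (S 0 : F →ₗ[ℝ] F))
  · exact hF.tendsto_of_eventually_fix hS fun x =>
      eventually_atTop.2 ⟨ι x, fun n hn => by rw [hSδ, hr_fix n x hn]⟩
  · intro n h
    have := hr_le n (ι.symm (n + 1))
    rw [← hF.isometry.injective (sub_eq_zero.1 h), hιu] at this
    omega
  · intro m n
    simp only [hz, map_sub, hSδ]
    split_ifs with hnm
    · rw [hr_fix m _ (by rw [hιu]; omega), hr_fix m _ ((hr_le n _).trans hnm.le)]
    · rw [hr_comp m n _ (by omega), sub_self]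
  · intro n y
    let V := (ℝ ∙ z n).comap (S (n + 1) - S n : F →L[ℝ] F).toLinearMap
    have hV : IsClosed (V : Set F) :=
      (Submodule.closed_of_finiteDimensional (ℝ ∙ z n)).preimage (S (n + 1) - S n).continuous
    have hVtop := hF.eq_top_of_isClosed hV fun x => by
      -- `r n` factors through `r (n + 1)`, which moves `x` to `ι.symm k` for some `k ≤ n + 1`
      simp only [V, Submodule.mem_comap, sub_apply,
        ContinuousLinearMap.coe_coe, hSδ, ← hr_comp n (n + 1) x n.le_succ]
      obtain ⟨k, hk, hxk⟩ : ∃ k ≤ n + 1, r (n + 1) x = ι.symm k :=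
        ⟨_, hr_le _ x, (ι.symm_apply_apply _).symm⟩
      rcases hk.lt_or_eq with hk | rfl
      · rw [hxk, hr_fix n _ (by rw [hιu]; omega), sub_self]
        exact Submodule.zero_mem _
      · rw [hxk]
        exact Submodule.mem_span_singleton_self _
    simpa [V] using (hVtop ▸ Submodule.mem_top : y ∈ V)

end IsLipFreeSpace

structure IsSafePredecessor {X : Type*} [MetricSpace X] (ι : X ≃ ℕ) (p : X → X) : Prop where
  lt : ∀ x, ι x ≠ 0 → ι (p x) < ι x
  dist_le : ∀ x s, ι s < ι x → dist (p x) s ≤ dist x s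

namespace IsSafePredecessor

variable {X : Type*} [MetricSpace X] {ι : X ≃ ℕ} {p : X → X}

theorem comp_isometryEquiv (h : IsSafePredecessor ι p) {Y : Type*} [MetricSpace Y] (τ : Y ≃ᵢ X) :
    IsSafePredecessor (τ.toEquiv.trans ι) (τ.symm ∘ p ∘ τ) where
  lt x hx := by simpa using h.lt (τ x) hx
  dist_le x s hs :=
    calc dist (τ.symm (p (τ x))) s = dist (p (τ x)) (τ s) := by
          rw [← τ.dist_eq, τ.apply_symm_apply]
      _ ≤ dist (τ x) (τ s) := h.dist_le (τ x) (τ s) hs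
      _ = dist x s := τ.dist_eq x s

def retraction (h : IsSafePredecessor ι p) (n : ℕ) (x : X) : X :=
  if ι x ≤ n then x else h.retraction n (p x)
termination_by ι x
decreasing_by exact h.lt x (by omega)

variable (h : IsSafePredecessor ι p) {n : ℕ} {x : X}

theorem retraction_of_le (hx : ι x ≤ n) : h.retraction n x = x := by
  rw [retraction, if_pos hx]

theorem retraction_of_lt (hx : n < ι x) : h.retraction n x = h.retraction n (p x) := by
  rw [retraction, if_neg (by omega)]

theorem retraction_le (n : ℕ) (x : X) : ι (h.retraction n x) ≤ n := by
  rcases le_or_gt (ι x) n with hx | hx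
  · rwa [h.retraction_of_le hx]
  · rw [h.retraction_of_lt hx]
    exact retraction_le n (p x)
termination_by ι x
decreasing_by exact h.lt x (by omega)

theorem retraction_retraction {m : ℕ} (hmn : m ≤ n) (x : X) :
    h.retraction m (h.retraction n x) = h.retraction m x := by
  rcases le_or_gt (ι x) n with hx | hx
  · rw [h.retraction_of_le hx]
  · rw [h.retraction_of_lt hx, h.retraction_of_lt (hmn.trans_lt hx),
      retraction_retraction hmn (p x)]
termination_by ι x
decreasing_by exact h.lt x (by omega)

theorem dist_retraction_le (n : ℕ) (x y : X) :
    dist (h.retraction n x) (h.retraction n y) ≤ dist x y := by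
  induction hN : ι x + ι y using Nat.strong_induction_on generalizing x y with
  | _ N ih =>
  wlog hyx : ι y < ι x generalizing x y
  · rcases (not_lt.1 hyx).lt_or_eq with hxy | hxy
    · rw [dist_comm, dist_comm x]
      exact this y x (by omega) hxy
    · rw [ι.injective hxy, dist_self, dist_self]
  rcases le_or_gt (ι x) n with hx | hx
  · rw [h.retraction_of_le hx, h.retraction_of_le (by omega)]
  · have hpx := h.lt x (by omega)
    rw [h.retraction_of_lt hx]
    exact (ih _ (by omega) (p x) y rfl).trans (h.dist_le x y hyx)

theorem lipschitzWith_retraction (n : ℕ) : LipschitzWith 1 (h.retraction n) :=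
  LipschitzWith.of_dist_le_mul fun x y => by simpa using h.dist_retraction_le n x y

end IsSafePredecessor

theorem IsLipFreeSpace.exists_isMonotoneSchauderBasis_of_isSafePredecessor {M : Type*}
    [MetricSpace M] {b : M} {F : Type} [NormedAddCommGroup F] [NormedSpace ℝ F] [CompleteSpace F]
    {δ : M → F} (hF : IsLipFreeSpace M b F δ) {ι : M ≃ ℕ} (hb : ι b = 0) {p : M → M}
    (hp : IsSafePredecessor ι p) : ∃ z : ℕ → F, IsMonotoneSchauderBasis z :=
  hF.exists_isMonotoneSchauderBasis_of_retractions ι hb hp.retraction hp.lipschitzWith_retraction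
    hp.retraction_le (fun _ _ => hp.retraction_of_le) fun _ _ x hmn =>
      hp.retraction_retraction hmn x

theorem exists_injective_nat_strictMono_of_finite_fibers {α : Type*} (κ : α → ℕ)
    (hκ : ∀ k, (κ ⁻¹' {k}).Finite) :
    ∃ g : α → ℕ, Function.Injective g ∧ ∀ x y, κ x < κ y → g x < g y := by
  have : Countable α := by
    have huniv : (Set.univ : Set α) = ⋃ k, κ ⁻¹' {k} := by ext; simp
    exact Set.countable_univ_iff.1 (huniv ▸ Set.countable_iUnion fun k => (hκ k).countable)
  obtain ⟨e, he⟩ := exists_injective_nat α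
  -- the fibre `κ ⁻¹' {k}` is sent into `[offset k, offset (k + 1))`
  let bound k := (hκ k).toFinset.sup e
  let offset k := ∑ j ∈ Finset.range k, (bound j + 1)
  have he_le : ∀ x, e x ≤ bound (κ x) := fun x => Finset.le_sup (by simp)
  have hmono : ∀ x y, κ x < κ y → offset (κ x) + e x < offset (κ y) + e y := fun x y h =>
    calc offset (κ x) + e x < offset (κ x + 1) := by
          simp only [offset, Finset.sum_range_succ]; linarith [he_le x]
      _ ≤ offset (κ y) := Finset.sum_le_sum_of_subset (Finset.range_subset_range.2 h)
      _ ≤ offset (κ y) + e y := Nat.le_add_right _ _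
  refine ⟨fun x => offset (κ x) + e x, fun x y hxy => ?_, hmono⟩
  rcases lt_trichotomy (κ x) (κ y) with h | h | h
  · exact absurd hxy (hmono x y h).ne
  · exact he (by simpa [h] using hxy)
  · exact absurd hxy (hmono y x h).ne'

theorem exists_equiv_nat_strictMono_of_finite_fibers {α : Type*} [Infinite α] (κ : α → ℕ)
    (hκ : ∀ k, (κ ⁻¹' {k}).Finite) : ∃ ι : α ≃ ℕ, ∀ x y, κ x < κ y → ι x < ι y := by
  classical
  obtain ⟨g, hg, hgκ⟩ := exists_injective_nat_strictMono_of_finite_fibers κ hκ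
  have hinf : (Set.range g).Infinite := Set.infinite_range_of_injective hg
  -- `ι x` is the position of `g x` in the increasing enumeration of `Set.range g`
  let ι x := Nat.count (· ∈ Set.range g) (g x)
  refine ⟨Equiv.ofBijective ι ⟨fun x y h => hg (Nat.count_injective ⟨x, rfl⟩ ⟨y, rfl⟩ h),
    fun n => ?_⟩, fun x y h => Nat.count_strict_mono ⟨x, rfl⟩ (hgκ x y h)⟩
  obtain ⟨x, hx⟩ := Nat.nth_mem_of_infinite (p := (· ∈ Set.range g)) hinf n
  exact ⟨x, by simp only [ι, hx]; exact Nat.count_nth_of_infinite hinf n⟩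

theorem Int.abs_sub_sign_sub_le {a c : ℤ} (hc : c.natAbs ≤ a.natAbs) :
    |a - a.sign - c| ≤ max |a - c| 1 := by
  have h₁ := le_max_left |a - c| 1
  have h₂ := le_max_right |a - c| 1
  have h₃ := neg_abs_le (a - c)
  have h₄ := le_abs_self (a - c)
  rcases lt_trichotomy a 0 with h | rfl | h
  · rw [Int.sign_eq_neg_one_of_neg h, abs_le]; omega
  · simp_all
  · rw [Int.sign_eq_one_of_pos h, abs_le]; omega

theorem Int.natAbs_sub_sign (a : ℤ) : (a - a.sign).natAbs = a.natAbs - 1 := by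
  rcases lt_trichotomy a 0 with h | rfl | h
  · rw [Int.sign_eq_neg_one_of_neg h]; omega
  · simp
  · rw [Int.sign_eq_one_of_pos h]; omega

def intGrid : AddSubgroup CZero where
  carrier := {x | ∀ n : ℕ, ∃ k : ℤ, x n = (k : ℝ)}
  add_mem' {x y} hx hy n := by
    obtain ⟨a, ha⟩ := hx n
    obtain ⟨b, hb⟩ := hy n
    exact ⟨a + b, by simp [ha, hb]⟩
  zero_mem' _ := ⟨0, by simp⟩
  neg_mem' {x} hx n := by
    obtain ⟨a, ha⟩ := hx n
    exact ⟨-a, by simp [ha]⟩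

namespace intGrid

noncomputable def coord (x : intGrid) (n : ℕ) : ℤ := ⌊(x : CZero) n⌋

theorem coord_cast (x : intGrid) (n : ℕ) : (coord x n : ℝ) = (x : CZero) n := by
  obtain ⟨k, hk⟩ := x.2 n
  rw [coord, hk, Int.floor_intCast]

theorem ext_coord {x y : intGrid} (h : ∀ n, coord x n = coord y n) : x = y :=
  Subtype.ext <| ZeroAtInftyContinuousMap.ext fun n => by rw [← coord_cast, ← coord_cast, h]

@[simp] theorem coord_zero (n : ℕ) : coord 0 n = 0 := by simp [coord]

theorem coord_sub (x y : intGrid) (n : ℕ) : coord (x - y) n = coord x n - coord y n :=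
  Int.cast_injective (α := ℝ) <| by push_cast [coord_cast]; rfl

theorem coord_zsmul (k : ℤ) (x : intGrid) (n : ℕ) : coord (k • x) n = k * coord x n :=
  Int.cast_injective (α := ℝ) <| by push_cast [coord_cast]; simp

theorem finite_setOf_coord_ne_zero (x : intGrid) : {n | coord x n ≠ 0}.Finite := by
  have hx : Tendsto (x : CZero) cofinite (𝓝 0) := by
    simpa [Nat.cofinite_eq_atTop] using (x : CZero).zero_at_infty'
  refine eventually_cofinite.1 <|
    (hx.eventually (Metric.ball_mem_nhds 0 one_pos)).mono fun n hn => ?_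
  have : |(coord x n : ℝ)| < 1 := by simpa [coord_cast] using hn
  exact_mod_cast Int.abs_lt_one_iff.1 (by exact_mod_cast this)

def unitVec (j : ℕ) : intGrid :=
  ⟨⟨⟨(Pi.single j 1 : ℕ → ℝ), continuous_of_discreteTopology⟩, HasCompactSupport.is_zero_at_infty <|
      IsCompact.of_isClosed_subset (isCompact_singleton (x := j)) (isClosed_discrete _) <| by
        rw [tsupport, closure_discrete]; exact Pi.support_single_subset⟩,
    fun n => ⟨(Pi.single j 1 : ℕ → ℤ) n, by rcases eq_or_ne n j with rfl | h <;> simp [*]⟩⟩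

theorem coord_unitVec (j n : ℕ) : coord (unitVec j) n = (Pi.single j 1 : ℕ → ℤ) n :=
  Int.cast_injective (α := ℝ) <| by
    rw [coord_cast]; rcases eq_or_ne n j with rfl | h <;> simp [unitVec, *]

theorem dist_eq_coe (x y : intGrid) : dist x y = dist (x : CZero) y := rfl

theorem abs_coord_sub_le_dist (x y : intGrid) (n : ℕ) :
    ((|coord x n - coord y n| : ℤ) : ℝ) ≤ dist x y := by
  push_cast
  rw [coord_cast, coord_cast, ← Real.dist_eq, dist_eq_coe,
    ← ZeroAtInftyContinuousMap.dist_toBCF_eq_dist]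
  exact (x : CZero).toBCF.dist_coe_le_dist (g := (y : CZero).toBCF) n

theorem dist_le_of_forall {x y : intGrid} {c : ℝ} (hc : 0 ≤ c)
    (h : ∀ n, ((|coord x n - coord y n| : ℤ) : ℝ) ≤ c) : dist x y ≤ c := by
  rw [dist_eq_coe, ← ZeroAtInftyContinuousMap.dist_toBCF_eq_dist,
    BoundedContinuousFunction.dist_le hc]
  intro n
  simpa [coord_cast, Real.dist_eq] using h n

theorem one_le_dist {x y : intGrid} (h : x ≠ y) : 1 ≤ dist x y := by
  obtain ⟨n, hn⟩ : ∃ n, coord x n ≠ coord y n := by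
    by_contra! h'
    exact h (ext_coord h')
  calc (1 : ℝ) ≤ ((|coord x n - coord y n| : ℤ) : ℝ) := by
        exact_mod_cast Int.one_le_abs (sub_ne_zero.2 hn)
    _ ≤ dist x y := abs_coord_sub_le_dist x y n

noncomputable def support (x : intGrid) : Finset ℕ := (finite_setOf_coord_ne_zero x).toFinset

theorem mem_support {x : intGrid} {n : ℕ} : n ∈ support x ↔ coord x n ≠ 0 := by
  simp [support]

theorem support_nonempty {x : intGrid} (hx : x ≠ 0) : (support x).Nonempty := by
  rw [Finset.nonempty_iff_ne_empty]
  intro h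
  refine hx (ext_coord fun n => ?_)
  rw [coord_zero]
  by_contra hn
  simpa [h] using mem_support.2 hn

noncomputable def lastIndex (x : intGrid) : ℕ := (support x).sup id

noncomputable def supNorm (x : intGrid) : ℕ := (support x).sup fun n => (coord x n).natAbs

theorem le_lastIndex {x : intGrid} {n : ℕ} (h : coord x n ≠ 0) : n ≤ lastIndex x :=
  Finset.le_sup (f := id) (mem_support.2 h)

theorem lastIndex_le {x : intGrid} {c : ℕ} (h : ∀ n, coord x n ≠ 0 → n ≤ c) : lastIndex x ≤ c :=
  Finset.sup_le fun n hn => h n (mem_support.1 hn)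

theorem coord_lastIndex_ne_zero {x : intGrid} (hx : x ≠ 0) : coord x (lastIndex x) ≠ 0 := by
  obtain ⟨n, hn, hmax⟩ := Finset.exists_mem_eq_sup _ (support_nonempty hx) id
  rw [lastIndex, hmax]
  exact mem_support.1 hn

theorem natAbs_coord_le_supNorm (x : intGrid) (n : ℕ) : (coord x n).natAbs ≤ supNorm x := by
  by_cases h : coord x n = 0
  · simp [h]
  · exact Finset.le_sup (f := fun n => (coord x n).natAbs) (mem_support.2 h)

theorem supNorm_le {x : intGrid} {c : ℕ} (h : ∀ n, (coord x n).natAbs ≤ c) : supNorm x ≤ c :=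
  Finset.sup_le fun n _ => h n

theorem exists_natAbs_coord_eq_supNorm {x : intGrid} (hx : x ≠ 0) :
    ∃ n ∈ support x, (coord x n).natAbs = supNorm x := by
  obtain ⟨n, hn, hmax⟩ :=
    Finset.exists_mem_eq_sup _ (support_nonempty hx) fun n => (coord x n).natAbs
  exact ⟨n, hn, hmax.symm⟩

theorem lastIndex_mono {x y : intGrid} (h : ∀ n, (coord y n).natAbs ≤ (coord x n).natAbs) :
    lastIndex y ≤ lastIndex x :=
  lastIndex_le fun n hn => le_lastIndex (by have := h n; omega)

theorem supNorm_mono {x y : intGrid} (h : ∀ n, (coord y n).natAbs ≤ (coord x n).natAbs) :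
    supNorm y ≤ supNorm x :=
  supNorm_le fun n => (h n).trans (natAbs_coord_le_supNorm x n)

theorem finite_setOf_lastIndex_lt_supNorm_le (N : ℕ) :
    {x : intGrid | lastIndex x < N ∧ supNorm x ≤ N}.Finite := by
  refine Set.Finite.of_finite_image (f := fun x (i : Fin N) => coord x i) ?_ ?_
  · refine (Set.Finite.pi' fun _ => Set.finite_Icc (-(N : ℤ)) N).subset ?_
    rintro _ ⟨x, ⟨-, hx⟩, rfl⟩ i
    have := natAbs_coord_le_supNorm x i
    simp only [Set.mem_Icc]
    omega
  · intro x hx y hy hxy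
    refine ext_coord fun n => ?_
    rcases lt_or_ge n N with hn | hn
    · exact congrFun hxy ⟨n, hn⟩
    · have hxn : coord x n = 0 := by by_contra h; have := le_lastIndex h; grind
      have hyn : coord y n = 0 := by by_contra h; have := le_lastIndex h; grind
      rw [hxn, hyn]

noncomputable def shrink (x : intGrid) (j : ℕ) : intGrid := x - (coord x j).sign • unitVec j

theorem coord_shrink (x : intGrid) (j n : ℕ) :
    coord (shrink x j) n = if n = j then coord x j - (coord x j).sign else coord x n := by
  rw [shrink, coord_sub, coord_zsmul, coord_unitVec]
  rcases eq_or_ne n j with rfl | h <;> simp [*]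

theorem natAbs_coord_shrink_le (x : intGrid) (j n : ℕ) :
    (coord (shrink x j) n).natAbs ≤ (coord x n).natAbs := by
  rw [coord_shrink]
  split_ifs with h
  · rw [Int.natAbs_sub_sign, h]; omega
  · rfl

theorem natAbs_coord_shrink_self (x : intGrid) (j : ℕ) :
    (coord (shrink x j) j).natAbs = (coord x j).natAbs - 1 := by
  rw [coord_shrink, if_pos rfl, Int.natAbs_sub_sign]

noncomputable def block (x : intGrid) : ℕ := max (lastIndex x + 1) (supNorm x)

def IsTall (x : intGrid) : Prop := lastIndex x + 2 ≤ supNorm x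

noncomputable instance : DecidablePred IsTall := fun x => Nat.decLe (lastIndex x + 2) (supNorm x)

noncomputable def peaks (x : intGrid) : Finset ℕ :=
  (support x).filter fun n => (coord x n).natAbs = supNorm x

noncomputable def pivot (x : intGrid) : ℕ :=
  if IsTall x then sInf (peaks x : Set ℕ) else lastIndex x

noncomputable def rankInBlock (x : intGrid) : ℕ :=
  if IsTall x then (peaks x).card else block x - 1 + (coord x (lastIndex x)).natAbs

-- `rankInBlock x ≤ 2 * block x`, so `rank` orders by `block` first, then by `rankInBlock`.
noncomputable def rank (x : intGrid) : ℕ := block x ^ 2 + rankInBlock x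

noncomputable def pred (x : intGrid) : intGrid := shrink x (pivot x)

theorem block_eq_of_isTall {x : intGrid} (h : IsTall x) : block x = supNorm x := by
  unfold IsTall at h; unfold block; omega

theorem block_eq_of_not_isTall {x : intGrid} (h : ¬ IsTall x) : block x = lastIndex x + 1 := by
  unfold IsTall at h; unfold block; omega

theorem rankInBlock_of_isTall {x : intGrid} (h : IsTall x) : rankInBlock x = (peaks x).card :=
  if_pos h

theorem rankInBlock_of_not_isTall {x : intGrid} (h : ¬ IsTall x) :
    rankInBlock x = block x - 1 + (coord x (lastIndex x)).natAbs :=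
  if_neg h

theorem pivot_of_not_isTall {x : intGrid} (h : ¬ IsTall x) : pivot x = lastIndex x := if_neg h

theorem mem_peaks {x : intGrid} {n : ℕ} :
    n ∈ peaks x ↔ coord x n ≠ 0 ∧ (coord x n).natAbs = supNorm x := by
  rw [peaks, Finset.mem_filter, mem_support]

theorem card_peaks_le (x : intGrid) : (peaks x).card ≤ lastIndex x + 1 := by
  refine (Finset.card_le_card fun n hn => ?_).trans_eq (Finset.card_range _)
  exact Finset.mem_range.2 (Nat.lt_succ_of_le (le_lastIndex (mem_peaks.1 hn).1))

theorem pivot_mem_peaks {x : intGrid} (h : IsTall x) : pivot x ∈ peaks x := by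
  have hx : x ≠ 0 := by
    rintro rfl
    have := supNorm_le (x := 0) (c := 0) (by simp)
    unfold IsTall at h; omega
  obtain ⟨n, hn, hmax⟩ := exists_natAbs_coord_eq_supNorm hx
  rw [pivot, if_pos h]
  exact Nat.sInf_mem (s := (peaks x : Set ℕ)) ⟨n, Finset.mem_filter.2 ⟨hn, hmax⟩⟩

theorem coord_pivot_ne_zero {x : intGrid} (hx : x ≠ 0) : coord x (pivot x) ≠ 0 := by
  by_cases h : IsTall x
  · exact (mem_peaks.1 (pivot_mem_peaks h)).1
  · rw [pivot_of_not_isTall h]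
    exact coord_lastIndex_ne_zero hx

theorem rankInBlock_le (x : intGrid) : rankInBlock x ≤ 2 * block x := by
  have := natAbs_coord_le_supNorm x (lastIndex x)
  have := card_peaks_le x
  unfold rankInBlock block
  split_ifs <;> omega

theorem rankInBlock_pos {x : intGrid} (hx : x ≠ 0) : 0 < rankInBlock x := by
  unfold rankInBlock
  split_ifs with h
  · exact Finset.card_pos.2 ⟨_, pivot_mem_peaks h⟩
  · have := coord_lastIndex_ne_zero hx
    omega

theorem rank_lt_rank_of_block_lt {x y : intGrid} (h : block y < block x) : rank y < rank x := by
  have := rankInBlock_le y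
  unfold rank
  nlinarith

theorem rank_lt_rank_of_rankInBlock_lt {x y : intGrid} (hb : block y = block x)
    (h : rankInBlock y < rankInBlock x) : rank y < rank x := by
  unfold rank; rw [hb]; omega

theorem block_le_of_rank_le {x y : intGrid} (h : rank y ≤ rank x) : block y ≤ block x :=
  not_lt.1 fun hlt => (rank_lt_rank_of_block_lt hlt).not_ge h

theorem rankInBlock_le_of_rank_le {x y : intGrid} (hb : block y = block x) (h : rank y ≤ rank x) :
    rankInBlock y ≤ rankInBlock x := by
  unfold rank at h; rw [hb] at h; omega

theorem rank_zero_lt {x : intGrid} (hx : x ≠ 0) : rank 0 < rank x := by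
  have h0 : ∀ n, coord (0 : intGrid) n = 0 := coord_zero
  have hli : lastIndex 0 = 0 := Nat.le_zero.1 (lastIndex_le fun n h => absurd (h0 n) h)
  have hsn : supNorm 0 = 0 := Nat.le_zero.1 (supNorm_le fun n => by simp [h0])
  have hb : block 0 = 1 := by simp [block, hli, hsn]
  have hr : rankInBlock 0 = 0 := by simp [rankInBlock, IsTall, hli, hsn, hb]
  have := rankInBlock_pos hx
  have : 1 ≤ block x := le_max_of_le_left (Nat.le_add_left 1 _)
  unfold rank
  nlinarith

theorem finite_rank_preimage (k : ℕ) : (rank ⁻¹' {k}).Finite := by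
  refine (finite_setOf_lastIndex_lt_supNorm_le k).subset fun x (hx : rank x = k) => ?_
  have : block x ≤ rank x := by unfold rank; nlinarith
  unfold block at this
  exact ⟨by omega, by omega⟩

theorem block_pred_le (x : intGrid) : block (pred x) ≤ block x :=
  max_le_max (Nat.add_le_add_right (lastIndex_mono (natAbs_coord_shrink_le x _)) 1)
    (supNorm_mono (natAbs_coord_shrink_le x _))

theorem rankInBlock_pred_lt {x : intGrid} (hx : x ≠ 0) (h : block (pred x) = block x) :
    rankInBlock (pred x) < rankInBlock x := by
  have hle := natAbs_coord_shrink_le x (pivot x)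
  have hpiv := natAbs_coord_shrink_self x (pivot x)
  have hli := lastIndex_mono hle
  have hsn := supNorm_mono hle
  have hpos := Int.natAbs_pos.2 (coord_pivot_ne_zero hx)
  rw [← pred] at hle hpiv hli hsn
  by_cases ht : IsTall x
  · -- the peak at the pivot is lowered, and no new peak appears
    have hbx := block_eq_of_isTall ht
    have hsn' : supNorm (pred x) = supNorm x := by
      unfold block at h hbx; unfold IsTall at ht; omega
    have hyt : IsTall (pred x) := by unfold IsTall at ht ⊢; omega
    have hjx := mem_peaks.1 (pivot_mem_peaks ht)
    rw [rankInBlock_of_isTall hyt, rankInBlock_of_isTall ht]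
    refine Finset.card_lt_card <| (Finset.ssubset_iff_of_subset fun n hn => ?_).2
      ⟨pivot x, pivot_mem_peaks ht, fun hj => by have := (mem_peaks.1 hj).2; omega⟩
    have hyn := mem_peaks.1 hn
    have := hle n
    have := natAbs_coord_le_supNorm x n
    exact mem_peaks.2 ⟨by omega, by omega⟩
  · have hbx := block_eq_of_not_isTall ht
    rw [pivot_of_not_isTall ht] at hpiv hpos
    rw [rankInBlock_of_not_isTall ht]
    by_cases hyt : IsTall (pred x)
    · rw [rankInBlock_of_isTall hyt]
      have := card_peaks_le (pred x)
      have := block_eq_of_isTall hyt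
      unfold IsTall at hyt
      omega
    · have hby := block_eq_of_not_isTall hyt
      have hly : lastIndex (pred x) = lastIndex x := by omega
      rw [rankInBlock_of_not_isTall hyt, hly]
      omega

theorem rank_pred_lt {x : intGrid} (hx : x ≠ 0) : rank (pred x) < rank x := by
  rcases (block_pred_le x).lt_or_eq with h | h
  · exact rank_lt_rank_of_block_lt h
  · exact rank_lt_rank_of_rankInBlock_lt h (rankInBlock_pred_lt hx h)

theorem natAbs_coord_pivot_le_of_rank_le {x s : intGrid} (h : rank s ≤ rank x) :
    (coord s (pivot x)).natAbs ≤ (coord x (pivot x)).natAbs := by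
  have hb := block_le_of_rank_le h
  by_cases ht : IsTall x
  · have := natAbs_coord_le_supNorm s (pivot x)
    have := block_eq_of_isTall ht
    have : supNorm s ≤ block s := le_max_right _ _
    rw [(mem_peaks.1 (pivot_mem_peaks ht)).2]
    omega
  · -- if `s` is nonzero at `lastIndex x`, it lies in the block of `x` and is not tall
    rw [pivot_of_not_isTall ht]
    by_cases hs : coord s (lastIndex x) = 0
    · simp [hs]
    have hli := le_lastIndex hs
    have hbx := block_eq_of_not_isTall ht
    have hst : ¬ IsTall s := fun hst => by
      have := block_eq_of_isTall hst; unfold IsTall at hst; omega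
    have hbs := block_eq_of_not_isTall hst
    have hr := rankInBlock_le_of_rank_le (by omega) h
    rw [rankInBlock_of_not_isTall hst, rankInBlock_of_not_isTall ht,
      show lastIndex s = lastIndex x by omega] at hr
    omega

theorem dist_pred_le {x s : intGrid} (hsx : s ≠ x) (h : rank s ≤ rank x) :
    dist (pred x) s ≤ dist x s := by
  refine dist_le_of_forall dist_nonneg fun n => ?_
  rw [pred, coord_shrink]
  split_ifs with hn
  · subst hn
    calc ((|coord x (pivot x) - (coord x (pivot x)).sign - coord s (pivot x)| : ℤ) : ℝ)
        ≤ ((max |coord x (pivot x) - coord s (pivot x)| 1 : ℤ) : ℝ) := by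
          exact_mod_cast Int.abs_sub_sign_sub_le (natAbs_coord_pivot_le_of_rank_le h)
      _ ≤ dist x s := by
          push_cast
          exact max_le (by exact_mod_cast abs_coord_sub_le_dist x s _) (one_le_dist hsx.symm)
  · exact abs_coord_sub_le_dist x s n

instance : Infinite intGrid :=
  Infinite.of_injective (fun n : ℕ => (n : ℤ) • unitVec 0) fun m n h => by
    have := congrArg (coord · 0) h
    simp only [coord_zsmul, coord_unitVec, Pi.single_eq_same, mul_one] at this
    exact_mod_cast this

theorem exists_isSafePredecessor : ∃ ι : intGrid ≃ ℕ, ι 0 = 0 ∧ IsSafePredecessor ι pred := by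
  obtain ⟨ι, hι⟩ := exists_equiv_nat_strictMono_of_finite_fibers rank finite_rank_preimage
  have hι0 : ι 0 = 0 := by
    obtain ⟨y, hy⟩ := ι.surjective 0
    rcases eq_or_ne y 0 with rfl | hy0
    · exact hy
    · have := hι 0 y (rank_zero_lt hy0); omega
  have hne : ∀ {x}, ι x ≠ 0 → x ≠ 0 := fun hx h => hx (h ▸ hι0)
  refine ⟨ι, hι0, fun x hx => hι _ _ (rank_pred_lt (hne hx)), fun x s hs => ?_⟩
  exact dist_pred_le (fun h => hs.ne (congrArg ι h)) (not_lt.1 fun h => (hι x s h).not_gt hs)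

theorem exists_isMonotoneSchauderBasis {b : intGrid} {F : Type} [NormedAddCommGroup F]
    [NormedSpace ℝ F] [CompleteSpace F] {δ : intGrid → F} (hF : IsLipFreeSpace intGrid b F δ) :
    ∃ z : ℕ → F, IsMonotoneSchauderBasis z := by
  obtain ⟨ι, hι0, hp⟩ := exists_isSafePredecessor
  -- translating by `b` makes `b` the first point of the enumeration
  let τ : intGrid ≃ᵢ intGrid := IsometryEquiv.subRight b
  exact hF.exists_isMonotoneSchauderBasis_of_isSafePredecessor (ι := τ.toEquiv.trans ι)
    (show ι (b - b) = 0 by rw [sub_self, hι0]) (hp.comp_isometryEquiv τ)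

end intGrid

/-- The Lipschitz-free space of the integer grid in `c₀` (the set of
finitely supported integer-valued sequences, i.e. the integer-valued elements of `c₀`)
has a monotone Schauder basis, i.e. one with basis constant `1`. -/
theorem stmt_16 (M : Set CZero)
    (hM : M = {x : CZero | ∀ n : ℕ, ∃ k : ℤ, x n = (k : ℝ)})
    (b : ↥M)
    (F : Type) [NormedAddCommGroup F] [NormedSpace ℝ F] [CompleteSpace F]
    (δ : ↥M → F) (hF : IsLipFreeSpace ↥M b F δ) :
    ∃ z : ℕ → F, IsSchauderBasis z ∧
      ∀ (y : F) (a : ℕ → ℝ),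
        Filter.Tendsto (fun n => ∑ i ∈ Finset.range n, a i • z i) Filter.atTop (nhds y) →
        ∀ n : ℕ, ‖∑ i ∈ Finset.range n, a i • z i‖ ≤ ‖y‖ := by
  subst hM
  exact intGrid.exists_isMonotoneSchauderBasis hF
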